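/- arXiv:2109.09708 — 4 statements merged into one kernel-verified Lean document; each statement's English description precedes it below -/
import Mathlib

section
/- Let b > 1 be real and d ≥ 1 an integer, and let f(r) := (b(1 − b^{−r})/(b − 1))/r² for positive integers r. Then f is minimized over r ∈ {1,…,d} at r = d, i.e., for all 1 ≤ r ≤ d: (b(1 − b^{−d})/(b − 1))/d² ≤ (b(1 − b^{−r})/(b − 1))/r². -/
/-!
Writing `g r = (1 - b⁻ʳ) / r`, the quantity to minimise is `b / (b - 1) * g r / r`, so it suffices
that `g` is antitone on `r ≥ 1`. After clearing denominators, `g (k + 1) ≤ g k` is Bernoulli's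
inequality `1 + (k + 1) (b - 1) ≤ b ^ (k + 1)`.
-/

lemma one_sub_zpow_neg_succ_div_le {b : ℝ} (hb : 0 < b) {k : ℕ} (hk : 1 ≤ k) :
    (1 - b ^ (-((k + 1 : ℕ) : ℤ))) / ((k + 1 : ℕ) : ℝ) ≤ (1 - b ^ (-(k : ℤ))) / k := by
  have hk0 : (0 : ℝ) < k := by exact_mod_cast hk
  have bernoulli : 1 + ((k : ℝ) + 1) * (b - 1) ≤ b ^ k * b := by
    simpa [pow_succ] using one_add_mul_le_pow (a := b - 1) (by linarith) (k + 1)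
  rw [zpow_neg, zpow_neg, zpow_natCast, zpow_natCast, pow_succ, Nat.cast_succ]
  rw [div_le_div_iff₀ (by positivity) hk0, ← sub_nonneg]
  have expand : (1 - (b ^ k)⁻¹) * ((k : ℝ) + 1) - (1 - (b ^ k * b)⁻¹) * k
      = (b ^ k * b - 1 - ((k : ℝ) + 1) * (b - 1)) / (b ^ k * b) := by
    field_simp
    ring
  rw [expand]
  exact div_nonneg (by linarith) (by positivity)

lemma one_sub_zpow_neg_div_le_of_le {b : ℝ} (hb : 0 < b) {r d : ℕ} (hr : 1 ≤ r) (hrd : r ≤ d) :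
    (1 - b ^ (-(d : ℤ))) / d ≤ (1 - b ^ (-(r : ℤ))) / r := by
  induction d, hrd using Nat.le_induction with
  | base => exact le_rfl
  | succ n hrn ih => exact (one_sub_zpow_neg_succ_div_le hb (hr.trans hrn)).trans ih

lemma one_sub_zpow_neg_nonneg {b : ℝ} (hb : 1 ≤ b) (r : ℕ) : 0 ≤ 1 - b ^ (-(r : ℤ)) := by
  rw [sub_nonneg, zpow_neg, zpow_natCast]
  exact inv_le_one_of_one_le₀ (one_le_pow₀ hb)

lemma one_sub_zpow_neg_div_sq_le_of_le {b : ℝ} (hb : 1 ≤ b) {r d : ℕ} (hr : 1 ≤ r)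
    (hrd : r ≤ d) : (1 - b ^ (-(d : ℤ))) / (d : ℝ) ^ 2 ≤ (1 - b ^ (-(r : ℤ))) / (r : ℝ) ^ 2 := by
  have hr0 : (0 : ℝ) < r := by exact_mod_cast hr
  simp only [sq, ← div_div]
  exact div_le_div₀ (div_nonneg (one_sub_zpow_neg_nonneg hb r) hr0.le)
    (one_sub_zpow_neg_div_le_of_le (by linarith) hr hrd) hr0 (by exact_mod_cast hrd)

theorem stmt_10_general (b : ℝ) (hb : 1 < b) (d : ℕ) :
    ∀ r : ℕ, 1 ≤ r → r ≤ d →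
      (b * (1 - b ^ (-(d : ℤ))) / (b - 1)) / (d : ℝ) ^ 2
        ≤ (b * (1 - b ^ (-(r : ℤ))) / (b - 1)) / (r : ℝ) ^ 2 := by
  intro r hr hrd
  have factor : ∀ k : ℕ, (b * (1 - b ^ (-(k : ℤ))) / (b - 1)) / (k : ℝ) ^ 2
      = b / (b - 1) * ((1 - b ^ (-(k : ℤ))) / (k : ℝ) ^ 2) := fun k => by ring
  rw [factor, factor]
  have hb1 : 0 < b - 1 := by linarith
  exact mul_le_mul_of_nonneg_left (one_sub_zpow_neg_div_sq_le_of_le hb.le hr hrd)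
    (by positivity)

theorem stmt_10 (b : ℝ) (hb : 1 < b) (d : ℕ) (hd : 1 ≤ d) :
    ∀ r : ℕ, 1 ≤ r → r ≤ d →
      (b * (1 - b ^ (-(d : ℤ))) / (b - 1)) / (d : ℝ) ^ 2
        ≤ (b * (1 - b ^ (-(r : ℤ))) / (b - 1)) / (r : ℝ) ^ 2 :=
  stmt_10_general b hb d
end

section
/- For every integer ℓ ≥ 7, (4ℓ)! · (ℓ!)⁴ / ((2ℓ)!)⁴ ≤ ℓ/2. -/
/-!
Write `r n = (4n)! (n!)⁴ / ((2n)!)⁴`. Cancelling factorials,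
`r (n+1) / r n = (n+1)(4n+1)(4n+3) / (2(2n+1)³)`, and this is at most `(n+1)/n` since
`n(4n+1)(4n+3) = 16n³ + 16n² + 3n < 2(2n+1)³`. So `r n / n` is non-increasing for `n ≥ 1`,
and the claim follows from the value at `n = 7`.
-/

open Nat

def quarticFactorialRatio (n : ℕ) : ℚ := ((4 * n)! * (n ! : ℚ) ^ 4) / ((2 * n)! : ℚ) ^ 4

lemma quarticFactorialRatio_succ (n : ℕ) :
    quarticFactorialRatio (n + 1) =
      quarticFactorialRatio n * ((n + 1) * (4 * n + 1) * (4 * n + 3) / (2 * (2 * n + 1) ^ 3)) := by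
  have h4 : (4 * (n + 1))! = (4 * n + 4) * (4 * n + 3) * (4 * n + 2) * (4 * n + 1) * (4 * n)! := by
    rw [show 4 * (n + 1) = 4 * n + 1 + 1 + 1 + 1 by ring]
    simp only [factorial_succ]; ring
  have h2 : (2 * (n + 1))! = (2 * n + 2) * (2 * n + 1) * (2 * n)! := by
    rw [show 2 * (n + 1) = 2 * n + 1 + 1 by ring]
    simp only [factorial_succ]; ring
  unfold quarticFactorialRatio
  rw [h4, h2, factorial_succ]
  push_cast
  field_simp
  ring

lemma quarticFactorialRatio_succ_le {n : ℕ} (hn : 0 < n) :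
    quarticFactorialRatio (n + 1) ≤ quarticFactorialRatio n * ((n + 1) / n) := by
  have hr : 0 ≤ quarticFactorialRatio n := by unfold quarticFactorialRatio; positivity
  rw [quarticFactorialRatio_succ]
  refine mul_le_mul_of_nonneg_left ?_ hr
  rw [div_le_div_iff₀ (by positivity) (by exact_mod_cast hn)]
  nlinarith [sq_nonneg (n : ℚ)]

theorem quarticFactorialRatio_le_half {ℓ : ℕ} (hℓ : 7 ≤ ℓ) : quarticFactorialRatio ℓ ≤ ℓ / 2 := by
  induction ℓ, hℓ using Nat.le_induction with
  | base => unfold quarticFactorialRatio; norm_num [Nat.factorial]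
  | succ n hn ih =>
    have hn₀ : 0 < n := by omega
    calc quarticFactorialRatio (n + 1)
        ≤ quarticFactorialRatio n * ((n + 1) / n) := quarticFactorialRatio_succ_le hn₀
      _ ≤ n / 2 * ((n + 1) / n) := by gcongr
      _ = ((n + 1 : ℕ) : ℚ) / 2 := by field_simp; push_cast; ring

theorem stmt_15 (ℓ : ℕ) (hℓ : 7 ≤ ℓ) :
    ((Nat.factorial (4 * ℓ) : ℚ) * (Nat.factorial ℓ : ℚ) ^ 4)
        / ((Nat.factorial (2 * ℓ) : ℚ)) ^ 4 ≤ (ℓ : ℚ) / 2 :=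
  quarticFactorialRatio_le_half hℓ
end

section
/- Let d ≥ 2 be an integer. Define, for even r ∈ {1,…,d}, G(r) := (2(2d² − 1)/r − (2d − 1))/(2d(d² − 1)) and for odd r ∈ {1,…,d}, G(r) := (4d²/r − (2d+1)/r² − (2d − 1))/(2d(d² − 1)). Then G is minimized over r ∈ {1,…,d} at r = d. -/
/-!
Up to the positive factor `2d(d² - 1)`, `G` is given on even and on odd `r` by two explicit
branches, both decreasing in `r ≥ 1`. At equal `r ≤ d` the odd branch lies below the even one
(their difference is `(2r - 2d - 1)/r²`), and the even branch at `d` lies below the odd branch at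
`d - 1`. Hence in every parity case the value at `r = d` is the smallest.
-/

noncomputable section

namespace OddGraph

def evenBranch (d r : ℝ) : ℝ := 2 * (2 * d ^ 2 - 1) / r - (2 * d - 1)

def oddBranch (d r : ℝ) : ℝ := 4 * d ^ 2 / r - (2 * d + 1) / r ^ 2 - (2 * d - 1)

variable {d r s : ℝ}

theorem evenBranch_le_of_le (hd : 1 ≤ d) (hr : 0 < r) (hrs : r ≤ s) :
    evenBranch d s ≤ evenBranch d r := by
  unfold evenBranch
  gcongr
  nlinarith

theorem oddBranch_le_of_le (hd : 2 ≤ d) (hr : 1 ≤ r) (hrs : r ≤ s) :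
    oddBranch d s ≤ oddBranch d r := by
  have hs : 0 < s := by linarith
  have key : oddBranch d r - oddBranch d s
      = (s - r) * (4 * d ^ 2 * r * s - (2 * d + 1) * (r + s)) / (r ^ 2 * s ^ 2) := by
    unfold oddBranch
    field_simp
    ring
  have hfactor : 0 ≤ 4 * d ^ 2 * r * s - (2 * d + 1) * (r + s) := by
    have hrs2 : r + s ≤ 2 * (r * s) := by nlinarith
    have hd2 : 2 * d + 1 ≤ 2 * d ^ 2 := by nlinarith
    nlinarith [mul_le_mul hd2 hrs2 (by linarith) (by positivity)]
  have : 0 ≤ oddBranch d r - oddBranch d s := by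
    rw [key]
    exact div_nonneg (mul_nonneg (by linarith) hfactor) (by positivity)
  linarith

theorem oddBranch_le_evenBranch (hr : 0 < r) (hrd : r ≤ d) :
    oddBranch d r ≤ evenBranch d r := by
  have key : evenBranch d r - oddBranch d r = (2 * d + 1 - 2 * r) / r ^ 2 := by
    unfold evenBranch oddBranch
    field_simp
    ring
  have : 0 ≤ evenBranch d r - oddBranch d r := by
    rw [key]
    exact div_nonneg (by linarith) (by positivity)
  linarith

theorem evenBranch_le_oddBranch_sub_one (hd : 2 ≤ d) :
    evenBranch d d ≤ oddBranch d (d - 1) := by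
  have hd1 : 0 < d - 1 := by linarith
  have key : oddBranch d (d - 1) - evenBranch d d
      = (4 * d ^ 3 - 4 * d ^ 2 - 5 * d + 2) / (d * (d - 1) ^ 2) := by
    unfold evenBranch oddBranch
    field_simp
    ring
  have : 0 ≤ oddBranch d (d - 1) - evenBranch d d := by
    rw [key]
    exact div_nonneg (by nlinarith) (by positivity)
  linarith

def numerator (d : ℝ) (r : ℕ) : ℝ :=
  if r % 2 = 0 then evenBranch d r else oddBranch d r

theorem numerator_le {n r : ℕ} (hn : 2 ≤ n) (hr : 1 ≤ r) (hrn : r ≤ n) :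
    numerator n n ≤ numerator n r := by
  have hn' : (2 : ℝ) ≤ n := by exact_mod_cast hn
  have hr' : (1 : ℝ) ≤ r := by exact_mod_cast hr
  have hrn' : (r : ℝ) ≤ n := by exact_mod_cast hrn
  unfold numerator
  rcases Nat.mod_two_eq_zero_or_one n with hnp | hnp <;>
    rcases Nat.mod_two_eq_zero_or_one r with hrp | hrp <;>
    simp only [hnp, hrp, if_true, one_ne_zero, if_false]
  · exact evenBranch_le_of_le (by linarith) (by linarith) hrn'
  · have : (r : ℝ) ≤ n - 1 := by
      have : r + 1 ≤ n := by omega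
      exact le_sub_iff_add_le.mpr (by exact_mod_cast this)
    exact (evenBranch_le_oddBranch_sub_one hn').trans (oddBranch_le_of_le hn' hr' this)
  · exact (oddBranch_le_evenBranch (by linarith) le_rfl).trans
      (evenBranch_le_of_le (by linarith) (by linarith) hrn')
  · exact oddBranch_le_of_le hn' hr' hrn'

end OddGraph

end

open OddGraph in
theorem stmt_17 (d : ℕ) (hd : 2 ≤ d) (G : ℕ → ℝ)
    (hG : ∀ r, G r = if r % 2 = 0 then
        (2 * (2 * (d : ℝ) ^ 2 - 1) / r - (2 * d - 1)) / (2 * d * ((d : ℝ) ^ 2 - 1))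
      else
        (4 * (d : ℝ) ^ 2 / r - (2 * d + 1) / (r : ℝ) ^ 2 - (2 * d - 1))
          / (2 * d * ((d : ℝ) ^ 2 - 1))) :
    ∀ r : ℕ, 1 ≤ r → r ≤ d → G d ≤ G r := by
  intro r hr hrd
  have hG' : ∀ r, G r = numerator d r / (2 * d * ((d : ℝ) ^ 2 - 1)) := fun r => by
    rw [hG r, numerator]
    split_ifs <;> rfl
  have hd' : (2 : ℝ) ≤ d := by exact_mod_cast hd
  rw [hG', hG']
  exact div_le_div_of_nonneg_right (numerator_le hd hr hrd) (by nlinarith)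
end

section
/- Let 0 ≤ i, j ≤ d ≤ n/2 be integers and define the Eberlein polynomial E_j(i) = Σ_{h=0}^{j} (−1)^h · C(i,h) · C(d−i, j−h) · C(n−d−i, j−h), where C denotes the binomial coefficient. For n = 2d+1 and j ∈ {1,…,d}, prove that 1 − E_j(2)/E_j(0) = (4jd² − 4j²d + 2j(j−1))/(d(d² − 1)), assuming d ≥ 2. -/
private lemma lemA' (n k : ℕ) (hn : 1 ≤ n) :
    ((n-1).choose k : ℚ) * n = (n.choose k) * ((n:ℚ) - k) := by
  obtain ⟨m, rfl⟩ : ∃ m, n = m + 1 := ⟨n - 1, by omega⟩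
  rcases le_or_gt k (m+1) with h | h
  · have key := Nat.choose_mul_succ_eq m k
    have := congrArg (Nat.cast : ℕ → ℚ) key
    push_cast [Nat.cast_sub h] at this
    simp only [Nat.add_sub_cancel]
    push_cast
    linear_combination this
  · simp [Nat.choose_eq_zero_of_lt (by omega : m < k),
      Nat.choose_eq_zero_of_lt (by omega : m + 1 < k), Nat.add_sub_cancel]

private lemma lemB' (n k : ℕ) (hk : 1 ≤ k) :
    (n.choose k : ℚ) * k = (n.choose (k-1)) * ((n:ℚ) - k + 1) := by
  obtain ⟨m, rfl⟩ : ∃ m, k = m + 1 := ⟨k - 1, by omega⟩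
  rcases le_or_gt m n with h | h
  · have key := Nat.choose_succ_right_eq n m
    have := congrArg (Nat.cast : ℕ → ℚ) key
    push_cast [Nat.cast_sub h] at this
    simp only [Nat.add_sub_cancel]
    push_cast
    linear_combination this
  · simp [Nat.choose_eq_zero_of_lt (by omega : n < m + 1),
      Nat.choose_eq_zero_of_lt (by omega : n < m), Nat.add_sub_cancel]

theorem stmt_18 (d : ℕ) (hd : 2 ≤ d) (E : ℕ → ℕ → ℚ)
    (hE : ∀ j i, E j i = ∑ h ∈ Finset.range (j + 1),
        (-1 : ℚ) ^ h * (Nat.choose i h) * (Nat.choose (d - i) (j - h))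
          * (Nat.choose (2 * d + 1 - d - i) (j - h))) :
    ∀ j, 1 ≤ j → j ≤ d →
      1 - E j 2 / E j 0
        = (4 * (j : ℚ) * (d : ℚ) ^ 2 - 4 * (j : ℚ) ^ 2 * d + 2 * j * ((j : ℚ) - 1))
          / ((d : ℚ) * ((d : ℚ) ^ 2 - 1)) := by
  intro j hj1 hjd
  have h2d : (2:ℚ) ≤ (d:ℚ) := by exact_mod_cast hd
  have hjdq : (j:ℚ) ≤ (d:ℚ) := by exact_mod_cast hjd
  have hj1q : (1:ℚ) ≤ (j:ℚ) := by exact_mod_cast hj1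
  have hd0 : (d:ℚ) ≠ 0 := by positivity
  have hdm1 : (d:ℚ) - 1 ≠ 0 := by intro h; linarith
  have hdp1 : (d:ℚ) + 1 ≠ 0 := by positivity
  have hdj1 : (d:ℚ) - (j:ℚ) + 1 ≠ 0 := by intro h; linarith
  have hdj2 : (d:ℚ) - (j:ℚ) + 2 ≠ 0 := by intro h; linarith
  have hD : (d:ℚ) ^ 2 - 1 ≠ 0 := ne_of_gt (by nlinarith)
  have hA : ((d.choose j : ℕ) : ℚ) ≠ 0 :=
    Nat.cast_ne_zero.mpr (Nat.choose_pos hjd).ne'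
  have hB : (((d+1).choose j : ℕ) : ℚ) ≠ 0 :=
    Nat.cast_ne_zero.mpr (Nat.choose_pos (by omega)).ne'
  have hE0 : E j 0 = (d.choose j : ℚ) * ((d+1).choose j) := by
    rw [hE, show 2*d+1-d-0 = d+1 from by omega]
    rw [Finset.sum_eq_single_of_mem 0 (Finset.mem_range.mpr (by omega))]
    · simp
    · intro h _ hh
      simp [Nat.choose_eq_zero_of_lt (Nat.pos_of_ne_zero hh)]
  -- relations
  have r1 := lemA' d j (by omega)
  have r9 : ((d.choose j : ℕ) : ℚ) * ((d:ℚ)+1) = (((d+1).choose j : ℕ) : ℚ) * ((d:ℚ)+1-(j:ℚ)) := by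
    have := lemA' (d+1) j (by omega)
    simp only [Nat.add_sub_cancel] at this
    push_cast at this
    linear_combination this
  have hBd : (((d+1).choose j : ℕ) : ℚ) = (d.choose j : ℚ) * ((d:ℚ)+1) / ((d:ℚ)-(j:ℚ)+1) := by
    rw [eq_div_iff hdj1]; linear_combination -r9
  rcases lt_or_ge j 2 with hj2 | hj2
  · -- j = 1
    have hj : j = 1 := by omega
    subst hj
    have hE2 : E 1 2 = ((d:ℚ)-2) * ((d:ℚ)-1) - 2 := by
      rw [hE, show 2*d+1-d-2 = d-1 from by omega]
      rw [Finset.sum_range_succ, Finset.sum_range_succ]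
      simp [Nat.choose_one_right]
      rw [Nat.cast_sub (by omega : 2 ≤ d), Nat.cast_sub (by omega : 1 ≤ d)]
      push_cast; ring
    rw [hE2, hE0, hBd]
    push_cast [Nat.choose_one_right]
    field_simp [hD]
    ring
  · -- j ≥ 2
    have hE2 : E j 2 = ((d-2).choose j : ℚ) * ((d-1).choose j)
        - 2 * (((d-2).choose (j-1) : ℚ) * ((d-1).choose (j-1)))
        + ((d-2).choose (j-2) : ℚ) * ((d-1).choose (j-2)) := by
      rw [hE, show 2*d+1-d-2 = d-1 from by omega]
      rw [← Finset.sum_subset (Finset.range_subset_range.mpr (show 3 ≤ j+1 by omega))]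
      · rw [Finset.sum_range_succ, Finset.sum_range_succ, Finset.sum_range_succ]
        norm_num [Nat.choose]
        ring
      · intro x _ hx3
        have hx : 2 < x := by
          simp only [Finset.mem_range] at hx3; omega
        simp [Nat.choose_eq_zero_of_lt hx]
    have r2 : ((d-2).choose j : ℚ) * ((d:ℚ)-1) = ((d-1).choose j : ℚ) * ((d:ℚ)-1-(j:ℚ)) := by
      have := lemA' (d-1) j (by omega)
      rw [show d-1-1 = d-2 from by omega, Nat.cast_sub (by omega : 1 ≤ d)] at this
      linear_combination this
    have r3 := lemB' d j hj1
    have r3' : (d.choose j : ℚ) * (j:ℚ) = (d.choose (j-1) : ℚ) * ((d:ℚ)-(j:ℚ)+1) := r3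
    have r4 : ((d-1).choose (j-1) : ℚ) * (d:ℚ) = (d.choose (j-1) : ℚ) * ((d:ℚ)-(j:ℚ)+1) := by
      have := lemA' d (j-1) (by omega)
      rw [Nat.cast_sub hj1] at this
      linear_combination this
    have r5 : ((d-2).choose (j-1) : ℚ) * ((d:ℚ)-1) = ((d-1).choose (j-1) : ℚ) * ((d:ℚ)-(j:ℚ)) := by
      have := lemA' (d-1) (j-1) (by omega)
      rw [show d-1-1 = d-2 from by omega, Nat.cast_sub (by omega : 1 ≤ d),
        Nat.cast_sub hj1] at this
      linear_combination this
    have r6 : (d.choose (j-1) : ℚ) * ((j:ℚ)-1) = (d.choose (j-2) : ℚ) * ((d:ℚ)-(j:ℚ)+2) := by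
      have := lemB' d (j-1) (by omega)
      rw [show j-1-1 = j-2 from by omega, Nat.cast_sub hj1] at this
      linear_combination this
    have r7 : ((d-1).choose (j-2) : ℚ) * (d:ℚ) = (d.choose (j-2) : ℚ) * ((d:ℚ)-(j:ℚ)+2) := by
      have := lemA' d (j-2) (by omega)
      rw [Nat.cast_sub (by omega : 2 ≤ j)] at this
      linear_combination this
    have r8 : ((d-2).choose (j-2) : ℚ) * ((d:ℚ)-1) = ((d-1).choose (j-2) : ℚ) * ((d:ℚ)-(j:ℚ)+1) := by
      have := lemA' (d-1) (j-2) (by omega)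
      rw [show d-1-1 = d-2 from by omega, Nat.cast_sub (by omega : 1 ≤ d),
        Nat.cast_sub (by omega : 2 ≤ j)] at this
      linear_combination this
    -- division forms
    have hP : ((d-1).choose j : ℚ) = (d.choose j : ℚ) * ((d:ℚ)-(j:ℚ)) / (d:ℚ) := by
      rw [eq_div_iff hd0]; linear_combination r1
    have hQ : ((d-2).choose j : ℚ)
        = (d.choose j : ℚ) * ((d:ℚ)-(j:ℚ)) * ((d:ℚ)-(j:ℚ)-1) / ((d:ℚ) * ((d:ℚ)-1)) := by
      rw [eq_div_iff (mul_ne_zero hd0 hdm1)]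
      linear_combination (d:ℚ) * r2 + ((d:ℚ)-(j:ℚ)-1) * r1
    have hS : ((d-1).choose (j-1) : ℚ) = (d.choose j : ℚ) * (j:ℚ) / (d:ℚ) := by
      rw [eq_div_iff hd0]; linear_combination r4 - r3'
    have hT : ((d-2).choose (j-1) : ℚ)
        = (d.choose j : ℚ) * (j:ℚ) * ((d:ℚ)-(j:ℚ)) / ((d:ℚ) * ((d:ℚ)-1)) := by
      rw [eq_div_iff (mul_ne_zero hd0 hdm1)]
      linear_combination (d:ℚ) * r5 + ((d:ℚ)-(j:ℚ)) * (r4 - r3')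
    have qU : (d.choose (j-2) : ℚ) * (((d:ℚ)-(j:ℚ)+1) * ((d:ℚ)-(j:ℚ)+2))
        = (d.choose j : ℚ) * (j:ℚ) * ((j:ℚ)-1) := by
      linear_combination (-((j:ℚ)-1)) * r3' - ((d:ℚ)-(j:ℚ)+1) * r6
    have qV : ((d-1).choose (j-2) : ℚ) * ((d:ℚ) * ((d:ℚ)-(j:ℚ)+1)) * ((d:ℚ)-(j:ℚ)+2)
        = (d.choose j : ℚ) * (j:ℚ) * ((j:ℚ)-1) * ((d:ℚ)-(j:ℚ)+2) := by
      linear_combination ((d:ℚ)-(j:ℚ)+1) * ((d:ℚ)-(j:ℚ)+2) * r7 + ((d:ℚ)-(j:ℚ)+2) * qU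
    have qV' := mul_right_cancel₀ hdj2 qV
    have hV : ((d-1).choose (j-2) : ℚ)
        = (d.choose j : ℚ) * (j:ℚ) * ((j:ℚ)-1) / ((d:ℚ) * ((d:ℚ)-(j:ℚ)+1)) := by
      rw [eq_div_iff (mul_ne_zero hd0 hdj1)]; linear_combination qV'
    have hW : ((d-2).choose (j-2) : ℚ)
        = (d.choose j : ℚ) * (j:ℚ) * ((j:ℚ)-1) / ((d:ℚ) * ((d:ℚ)-1)) := by
      rw [eq_div_iff (mul_ne_zero hd0 hdm1)]
      linear_combination (d:ℚ) * r8 + qV'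
    rw [hE2, hE0, hQ, hP, hT, hS, hW, hV, hBd]
    field_simp [hD]
    ring
end
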